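/- arXiv:2411.12345 — 2 statements merged into one kernel-verified Lean document; each statement's English description precedes it below -/
import Mathlib

section
/- Let (a_i)_{i≥1}, (λ_i)_{i≥1}, (c_i)_{i≥1} be sequences of complex numbers with c_i ≠ 0 for all i ≥ 1, and set d_m(x) = ∏_{i=1}^m (c_i x² + a_i x + λ_i) (with d_0 = 1). Then in the field RatFunc ℂ of rational functions in one variable over ℂ, the set B' = {x^n : n ≥ 0} ∪ {1/d_m(x) : m ≥ 1} ∪ {x/d_m(x) : m ≥ 1} is linearly independent over ℂ and spans the ℂ-subspace W' of RatFunc ℂ spanned by {x^n/d_m(x) : n, m ≥ 0}; that is, B' is a basis of W'. -/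
open Polynomial

/-- `d_m(x) = ∏_{i=1}^m (c_i x² + a_i x + λ_i)`, with `d_0 = 1`. -/
noncomputable def dpoly {R : Type*} [CommRing R] (a lam c : ℕ → R) (m : ℕ) : Polynomial R :=
  ∏ i ∈ Finset.range m, (C (c (i + 1)) * X ^ 2 + C (a (i + 1)) * X + C (lam (i + 1)))

/-- `W'`, the ℂ-subspace of `RatFunc ℂ` spanned by `{x^n / d_m : n, m ≥ 0}`. -/
noncomputable def W'space (a lam c : ℕ → ℂ) : Submodule ℂ (RatFunc ℂ) :=
  Submodule.span ℂ
    {f | ∃ n m : ℕ, f = RatFunc.X ^ n / algebraMap (Polynomial ℂ) (RatFunc ℂ) (dpoly a lam c m)}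

/-- The family `B' = {x^n : n ≥ 0} ∪ {1/d_m : m ≥ 1} ∪ {x/d_m : m ≥ 1}`,
indexed by `ℕ ⊕ (ℕ ⊕ ℕ)` (the last two components shifted by one). -/
noncomputable def B'fam (a lam c : ℕ → ℂ) : ℕ ⊕ (ℕ ⊕ ℕ) → RatFunc ℂ
  | .inl n => RatFunc.X ^ n
  | .inr (.inl m) => 1 / algebraMap (Polynomial ℂ) (RatFunc ℂ) (dpoly a lam c (m + 1))
  | .inr (.inr m) =>
      RatFunc.X / algebraMap (Polynomial ℂ) (RatFunc ℂ) (dpoly a lam c (m + 1))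

namespace Stmt0Aux

/-- the quadratic factor -/
noncomputable def q (a lam c : ℕ → ℂ) (i : ℕ) : Polynomial ℂ :=
  C (c (i + 1)) * X ^ 2 + C (a (i + 1)) * X + C (lam (i + 1))

variable (a lam c : ℕ → ℂ)

lemma dpoly_eq (m : ℕ) : dpoly a lam c m = ∏ i ∈ Finset.range m, q a lam c i := rfl

lemma dpoly_succ (m : ℕ) :
    dpoly a lam c (m + 1) = dpoly a lam c m * q a lam c m := by
  simp [dpoly_eq, Finset.prod_range_succ]

variable (hc : ∀ i : ℕ, 1 ≤ i → c i ≠ 0)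
include hc

lemma q_natDegree (i : ℕ) : (q a lam c i).natDegree = 2 :=
  natDegree_quadratic (hc (i + 1) (Nat.le_add_left 1 i))

lemma q_ne_zero (i : ℕ) : q a lam c i ≠ 0 := by
  intro h
  have := q_natDegree a lam c hc i
  rw [h] at this
  simp at this

lemma dpoly_ne_zero (m : ℕ) : dpoly a lam c m ≠ 0 := by
  rw [dpoly_eq]
  exact Finset.prod_ne_zero_iff.2 fun i _ => q_ne_zero a lam c hc i

lemma dpoly_natDegree (m : ℕ) : (dpoly a lam c m).natDegree = 2 * m := by
  rw [dpoly_eq, natDegree_prod _ _ fun i _ => q_ne_zero a lam c hc i]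
  simp [q_natDegree a lam c hc, mul_comm]

lemma epoly_ne_zero (m M : ℕ) : (∏ i ∈ Finset.Ico m M, q a lam c i) ≠ 0 :=
  Finset.prod_ne_zero_iff.2 fun i _ => q_ne_zero a lam c hc i

lemma epoly_natDegree (m M : ℕ) :
    (∏ i ∈ Finset.Ico m M, q a lam c i).natDegree = 2 * (M - m) := by
  rw [natDegree_prod _ _ fun i _ => q_ne_zero a lam c hc i]
  simp [q_natDegree a lam c hc, mul_comm, Nat.card_Ico]

omit hc in
lemma dpoly_mul_epoly {m M : ℕ} (h : m ≤ M) :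
    dpoly a lam c m * ∏ i ∈ Finset.Ico m M, q a lam c i = dpoly a lam c M := by
  rw [dpoly_eq, dpoly_eq]
  exact Finset.prod_range_mul_prod_Ico _ h

end Stmt0Aux

/-- Polynomials with pairwise distinct `natDegree` are linearly independent. -/
lemma li_of_natDegree_injOn {ι : Type*} [DecidableEq ι] (f : ι → Polynomial ℂ) :
    ∀ s : Finset ι, (∀ i ∈ s, f i ≠ 0) →
      (∀ i ∈ s, ∀ j ∈ s, (f i).natDegree = (f j).natDegree → i = j) →
      ∀ g : ι → ℂ, ∑ i ∈ s, g i • f i = 0 → ∀ i ∈ s, g i = 0 := by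
  intro s
  induction s using Finset.strongInduction with
  | _ s ih =>
    intro hne hinj g hsum i hi
    have hs : s.Nonempty := ⟨i, hi⟩
    obtain ⟨i₀, hi₀, hmax⟩ := s.exists_max_image (fun j => (f j).natDegree) hs
    have hg₀ : g i₀ = 0 := by
      have hco := congrArg (fun p => Polynomial.coeff p (f i₀).natDegree) hsum
      simp only [Polynomial.finset_sum_coeff, Polynomial.coeff_smul,
        Polynomial.coeff_zero, smul_eq_mul] at hco
      rw [Finset.sum_eq_single i₀] at hco
      · have hlc : (f i₀).leadingCoeff ≠ 0 :=
          Polynomial.leadingCoeff_ne_zero.2 (hne i₀ hi₀)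
        exact (mul_eq_zero.1 hco).resolve_right hlc
      · intro j hj hji
        have hlt : (f j).natDegree < (f i₀).natDegree :=
          lt_of_le_of_ne (hmax j hj) fun h => hji (hinj j hj i₀ hi₀ h)
        rw [Polynomial.coeff_eq_zero_of_natDegree_lt hlt, mul_zero]
      · intro h; exact absurd hi₀ h
    rcases eq_or_ne i i₀ with rfl | hne'
    · exact hg₀
    · have hsub : s.erase i₀ ⊂ s := Finset.erase_ssubset hi₀
      have hsum' : ∑ j ∈ s.erase i₀, g j • f j = 0 := by
        rw [← Finset.add_sum_erase s _ hi₀, hg₀, zero_smul, zero_add] at hsum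
        exact hsum
      exact ih _ hsub (fun j hj => hne j (Finset.mem_of_mem_erase hj))
        (fun j hj k hk => hinj j (Finset.mem_of_mem_erase hj) k (Finset.mem_of_mem_erase hk))
        g hsum' i (Finset.mem_erase.2 ⟨hne', hi⟩)

open Stmt0Aux in
lemma mem_span_div (a lam c : ℕ → ℂ) (hc : ∀ i : ℕ, 1 ≤ i → c i ≠ 0) :
    ∀ (m : ℕ) (p : Polynomial ℂ),
      algebraMap (Polynomial ℂ) (RatFunc ℂ) p /
          algebraMap (Polynomial ℂ) (RatFunc ℂ) (dpoly a lam c m) ∈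
        Submodule.span ℂ (Set.range (B'fam a lam c)) := by
  intro m
  induction m with
  | zero =>
    intro p
    simp only [dpoly_eq, Finset.range_zero, Finset.prod_empty, map_one, div_one]
    induction p using Polynomial.induction_on' with
    | add f g hf hg => rw [map_add]; exact add_mem hf hg
    | monomial n z =>
      have : algebraMap (Polynomial ℂ) (RatFunc ℂ) (monomial n z) = z • RatFunc.X ^ n := by
        rw [← C_mul_X_pow_eq_monomial, map_mul, map_pow, RatFunc.algebraMap_C,
          RatFunc.algebraMap_X, RatFunc.smul_eq_C_mul]
      rw [this]
      exact Submodule.smul_mem _ z (Submodule.subset_span ⟨Sum.inl n, rfl⟩)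
  | succ m ihm =>
    intro p
    set φ := algebraMap (Polynomial ℂ) (RatFunc ℂ) with hφ
    set Q := q a lam c m with hQdef
    have hQ : Q ≠ 0 := q_ne_zero a lam c hc m
    have hA : φ Q ≠ 0 := RatFunc.algebraMap_ne_zero hQ
    have hpe : p = Q * (p / Q) + p % Q := (EuclideanDomain.div_add_mod p Q).symm
    have hdeg1 : (p % Q).natDegree ≤ 1 := by
      rcases eq_or_ne (p % Q) 0 with h0 | h0
      · simp [h0]
      · have h2 : (p % Q).natDegree < Q.natDegree :=
          natDegree_lt_natDegree h0 (EuclideanDomain.mod_lt _ hQ)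
        rw [q_natDegree a lam c hc m] at h2
        omega
    obtain ⟨α, β, hr⟩ := exists_eq_X_add_C_of_natDegree_le_one hdeg1
    have key : φ p / φ (dpoly a lam c (m + 1)) =
        φ (p / Q) / φ (dpoly a lam c m) +
          (α • (RatFunc.X / φ (dpoly a lam c (m + 1))) +
            β • (1 / φ (dpoly a lam c (m + 1)))) := by
      have hD : φ (dpoly a lam c (m + 1)) = φ (dpoly a lam c m) * φ Q := by
        rw [← map_mul, ← dpoly_succ]
      conv_lhs => rw [hpe]
      rw [map_add, add_div]
      have hdm : φ (dpoly a lam c m) ≠ 0 :=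
        RatFunc.algebraMap_ne_zero (dpoly_ne_zero a lam c hc m)
      rw [hr, hD]
      simp only [RatFunc.smul_eq_C_mul, ← RatFunc.algebraMap_C, ← RatFunc.algebraMap_X,
        ← hφ, map_add, map_mul]
      field_simp
    rw [key]
    refine add_mem (ihm _) (add_mem ?_ ?_)
    · exact Submodule.smul_mem _ α (Submodule.subset_span ⟨Sum.inr (Sum.inr m), rfl⟩)
    · exact Submodule.smul_mem _ β (Submodule.subset_span ⟨Sum.inr (Sum.inl m), rfl⟩)

open Stmt0Aux in
/-- If `c_i ≠ 0` for all `i ≥ 1`, then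
`B' = {x^n : n ≥ 0} ∪ {1/d_m : m ≥ 1} ∪ {x/d_m : m ≥ 1}` is a basis of
`W' = span {x^n / d_m : n, m ≥ 0}` in `RatFunc ℂ`: it is linearly independent over ℂ
and spans `W'`. -/
theorem stmt0 (a lam c : ℕ → ℂ) (hc : ∀ i : ℕ, 1 ≤ i → c i ≠ 0) :
    LinearIndependent ℂ (B'fam a lam c) ∧
      Submodule.span ℂ (Set.range (B'fam a lam c)) = W'space a lam c := by
  set φ := algebraMap (Polynomial ℂ) (RatFunc ℂ) with hφ
  constructor
  · rw [linearIndependent_iff']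
    intro s g hsum i hi
    classical
    set idx : ℕ ⊕ (ℕ ⊕ ℕ) → ℕ := fun j =>
      match j with
      | .inl _ => 0
      | .inr (.inl m) => m + 1
      | .inr (.inr m) => m + 1 with hidx
    set M : ℕ := s.sup idx with hM
    set P : ℕ ⊕ (ℕ ⊕ ℕ) → Polynomial ℂ := fun j =>
      match j with
      | .inl n => X ^ n * dpoly a lam c M
      | .inr (.inl m) => ∏ k ∈ Finset.Ico (m + 1) M, q a lam c k
      | .inr (.inr m) => X * ∏ k ∈ Finset.Ico (m + 1) M, q a lam c k with hP
    have hle : ∀ j ∈ s, idx j ≤ M := fun j hj => Finset.le_sup hj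
    have hmem : ∀ j ∈ s, B'fam a lam c j * φ (dpoly a lam c M) = φ (P j) := by
      intro j hj
      match j with
      | .inl n =>
        show RatFunc.X ^ n * φ (dpoly a lam c M) = φ (X ^ n * dpoly a lam c M)
        rw [map_mul, map_pow, RatFunc.algebraMap_X]
      | .inr (.inl m) =>
        have h1 : m + 1 ≤ M := hle _ hj
        have hsplit : dpoly a lam c M =
            dpoly a lam c (m + 1) * ∏ k ∈ Finset.Ico (m + 1) M, q a lam c k :=
          (dpoly_mul_epoly a lam c h1).symm
        have hd : φ (dpoly a lam c (m + 1)) ≠ 0 :=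
          RatFunc.algebraMap_ne_zero (dpoly_ne_zero a lam c hc _)
        show 1 / φ (dpoly a lam c (m + 1)) * φ (dpoly a lam c M) = φ (P (.inr (.inl m)))
        rw [hsplit, map_mul, one_div, ← mul_assoc, inv_mul_cancel₀ hd, one_mul]
      | .inr (.inr m) =>
        have h1 : m + 1 ≤ M := hle _ hj
        have hsplit : dpoly a lam c M =
            dpoly a lam c (m + 1) * ∏ k ∈ Finset.Ico (m + 1) M, q a lam c k :=
          (dpoly_mul_epoly a lam c h1).symm
        have hd : φ (dpoly a lam c (m + 1)) ≠ 0 :=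
          RatFunc.algebraMap_ne_zero (dpoly_ne_zero a lam c hc _)
        show RatFunc.X / φ (dpoly a lam c (m + 1)) * φ (dpoly a lam c M) =
          φ (X * ∏ k ∈ Finset.Ico (m + 1) M, q a lam c k)
        rw [hsplit, map_mul, map_mul, RatFunc.algebraMap_X]
        field_simp
    have hsmulφ : ∀ (z : ℂ) (p : Polynomial ℂ), φ (z • p) = z • φ p := by
      intro z p
      rw [Polynomial.smul_eq_C_mul, map_mul, RatFunc.algebraMap_C, ← RatFunc.smul_eq_C_mul]
    have h2 : ∑ j ∈ s, g j • P j = 0 := by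
      apply IsFractionRing.injective (Polynomial ℂ) (RatFunc ℂ)
      rw [map_sum, map_zero]
      calc ∑ j ∈ s, φ (g j • P j) = ∑ j ∈ s, g j • (B'fam a lam c j * φ (dpoly a lam c M)) := by
            refine Finset.sum_congr rfl fun j hj => ?_
            rw [hsmulφ, hmem j hj]
        _ = (∑ j ∈ s, g j • B'fam a lam c j) * φ (dpoly a lam c M) := by
            rw [Finset.sum_mul]
            exact Finset.sum_congr rfl fun j hj => (smul_mul_assoc _ _ _).symm
        _ = 0 := by rw [hsum, zero_mul]
    have hne : ∀ j ∈ s, P j ≠ 0 := by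
      intro j hj
      match j with
      | .inl n =>
        exact mul_ne_zero (pow_ne_zero _ X_ne_zero) (dpoly_ne_zero a lam c hc _)
      | .inr (.inl m) => exact epoly_ne_zero a lam c hc _ _
      | .inr (.inr m) => exact mul_ne_zero X_ne_zero (epoly_ne_zero a lam c hc _ _)
    have hdeg : ∀ j ∈ s, (P j).natDegree =
        match j with
        | .inl n => n + 2 * M
        | .inr (.inl m) => 2 * (M - (m + 1))
        | .inr (.inr m) => 1 + 2 * (M - (m + 1)) := by
      intro j hj
      match j with
      | .inl n =>
        show (X ^ n * dpoly a lam c M).natDegree = n + 2 * M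
        rw [natDegree_mul (pow_ne_zero _ X_ne_zero) (dpoly_ne_zero a lam c hc _),
          natDegree_X_pow, dpoly_natDegree a lam c hc]
      | .inr (.inl m) => exact epoly_natDegree a lam c hc _ _
      | .inr (.inr m) =>
        show (X * ∏ k ∈ Finset.Ico (m + 1) M, q a lam c k).natDegree = 1 + 2 * (M - (m + 1))
        rw [natDegree_mul X_ne_zero (epoly_ne_zero a lam c hc _ _), natDegree_X,
          epoly_natDegree a lam c hc]
    have hinj : ∀ j ∈ s, ∀ k ∈ s, (P j).natDegree = (P k).natDegree → j = k := by
      intro j hj k hk h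
      rw [hdeg j hj, hdeg k hk] at h
      match j, k with
      | .inl n, .inl n' =>
        simp only at h
        have : n = n' := by omega
        rw [this]
      | .inl n, .inr (.inl m) =>
        have h2 : m + 1 ≤ M := hle _ hk
        simp only at h; omega
      | .inl n, .inr (.inr m) =>
        have h2 : m + 1 ≤ M := hle _ hk
        simp only at h; omega
      | .inr (.inl m), .inl n =>
        have h1 : m + 1 ≤ M := hle _ hj
        simp only at h; omega
      | .inr (.inl m), .inr (.inl m') =>
        have h1 : m + 1 ≤ M := hle _ hj
        have h2 : m' + 1 ≤ M := hle _ hk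
        simp only at h
        have : m = m' := by omega
        rw [this]
      | .inr (.inl m), .inr (.inr m') =>
        simp only at h; omega
      | .inr (.inr m), .inl n =>
        have h1 : m + 1 ≤ M := hle _ hj
        simp only at h; omega
      | .inr (.inr m), .inr (.inl m') =>
        simp only at h; omega
      | .inr (.inr m), .inr (.inr m') =>
        have h1 : m + 1 ≤ M := hle _ hj
        have h2 : m' + 1 ≤ M := hle _ hk
        simp only at h
        have : m = m' := by omega
        rw [this]
    exact li_of_natDegree_injOn P s hne hinj g h2 i hi
  · apply le_antisymm
    · rw [Submodule.span_le]
      rintro _ ⟨j, rfl⟩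
      apply Submodule.subset_span
      match j with
      | .inl n =>
        refine ⟨n, 0, ?_⟩
        simp [dpoly_eq, B'fam]
      | .inr (.inl m) =>
        refine ⟨0, m + 1, ?_⟩
        simp [B'fam]
      | .inr (.inr m) =>
        refine ⟨1, m + 1, ?_⟩
        simp [B'fam]
    · rw [W'space, Submodule.span_le]
      rintro _ ⟨n, m, rfl⟩
      have : RatFunc.X ^ n = φ (X ^ n) := by rw [map_pow, RatFunc.algebraMap_X]
      rw [this]
      exact mem_span_div a lam c hc m (X ^ n)
end

section
/- Let R be a commutative ring and let (a_i)_{i≥1}, (b_i)_{i≥0}, (λ_i)_{i≥1}, (c_i)_{i≥1} be sequences in R. Then for every n ≥ 0, the polynomial P_n(x) ∈ R[x] equals the sum, over all dotted tilings T of a 1×n board, of wt(T). -/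
open Polynomial

/-- The polynomials `P_n` defined by `P_0 = 1`, `P_1 = x - b_0` and
`P_{n+1} = (x - b_n) P_n - (c_n x² + a_n x + λ_n) P_{n-1}` (so `P_{-1} = 0`). -/
noncomputable def Ppoly {R : Type*} [CommRing R] (a b lam c : ℕ → R) : ℕ → Polynomial R
  | 0 => 1
  | 1 => X - C (b 0)
  | n + 2 =>
      (X - C (b (n + 1))) * Ppoly a b lam c (n + 1) -
        (C (c (n + 1)) * X ^ 2 + C (a (n + 1)) * X + C (lam (n + 1))) * Ppoly a b lam c n

/-- Tiles for dotted tilings: monominoes `M_0, M_1` (with 0 or 1 dots) and dominoes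
`D_0, D_1, D_2` (with 0, 1 or 2 dots). -/
inductive Tile : Type
  | M0 | M1 | D0 | D1 | D2
  deriving DecidableEq

/-- The number of cells occupied by a tile. -/
def Tile.size : Tile → ℕ
  | .M0 => 1
  | .M1 => 1
  | .D0 => 2
  | .D1 => 2
  | .D2 => 2

/-- Weight of a tile placed after `pos` cells have been covered (so a monomino occupies
cell `i = pos + 1`, and a domino occupies cells `(i − 1, i) = (pos + 1, pos + 2)`):
`x` for `M_1`, `−b_{i−1}` for `M_0`, `−λ_{i−1}` for `D_0`, `−a_{i−1}·x` for `D_1`, and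
`−c_{i−1}·x²` for `D_2`. -/
noncomputable def tileWt {R : Type*} [CommRing R] (a b lam c : ℕ → R) (pos : ℕ) :
    Tile → Polynomial R
  | .M1 => X
  | .M0 => -C (b pos)
  | .D0 => -C (lam (pos + 1))
  | .D1 => -(C (a (pos + 1)) * X)
  | .D2 => -(C (c (pos + 1)) * X ^ 2)

/-- Weight of a dotted tiling, read from left to right starting after `pos` covered
cells: the product of the weights of its tiles. -/
noncomputable def tilingWt {R : Type*} [CommRing R] (a b lam c : ℕ → R) :
    ℕ → List Tile → Polynomial R
  | _, [] => 1
  | pos, t :: ts => tileWt a b lam c pos t * tilingWt a b lam c (pos + t.size) ts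

/-! ### Auxiliary material -/

/-- The finset of all dotted tilings of a `1 × n` board. -/
def tilings : ℕ → Finset (List Tile)
  | 0 => {[]}
  | 1 => {[Tile.M0], [Tile.M1]}
  | n + 2 =>
      ((tilings (n + 1)).image (· ++ [Tile.M0])) ∪
        ((tilings (n + 1)).image (· ++ [Tile.M1])) ∪
        ((tilings n).image (· ++ [Tile.D0])) ∪
        ((tilings n).image (· ++ [Tile.D1])) ∪
        ((tilings n).image (· ++ [Tile.D2]))

lemma Tile.size_pos (t : Tile) : 0 < t.size := by cases t <;> simp [Tile.size]

lemma sum_of_mem_tilings : ∀ n, ∀ T ∈ tilings n, (T.map Tile.size).sum = n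
  | 0, T, hT => by
      simp only [tilings, Finset.mem_singleton] at hT
      simp [hT]
  | 1, T, hT => by
      simp only [tilings, Finset.mem_insert, Finset.mem_singleton] at hT
      rcases hT with h | h <;> simp [h, Tile.size]
  | n + 2, T, hT => by
      simp only [tilings, Finset.mem_union, Finset.mem_image] at hT
      rcases hT with ((((⟨l, hl, rfl⟩ | ⟨l, hl, rfl⟩) | ⟨l, hl, rfl⟩) | ⟨l, hl, rfl⟩) |
        ⟨l, hl, rfl⟩) <;>
        simp [List.sum_append, sum_of_mem_tilings _ _ hl, Tile.size]

lemma eq_nil_of_sum_eq_zero {l : List Tile} (h : (l.map Tile.size).sum = 0) : l = [] := by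
  cases l with
  | nil => rfl
  | cons t ts =>
      simp only [List.map_cons, List.sum_cons] at h
      have := t.size_pos
      omega

lemma mem_tilings_of_sum (T : List Tile) : ∀ n, (T.map Tile.size).sum = n → T ∈ tilings n := by
  induction T using List.reverseRecOn with
  | nil =>
      intro n h
      simp only [List.map_nil, List.sum_nil] at h
      subst h
      simp [tilings]
  | append_singleton l t ih =>
      intro n h
      simp only [List.map_append, List.sum_append, List.map_cons, List.map_nil, List.sum_cons,
        List.sum_nil, add_zero] at h
      have hl := ih _ rfl
      cases t with
      | M0 =>
          rcases Nat.eq_zero_or_pos ((l.map Tile.size).sum) with h0 | hpos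
          · have := eq_nil_of_sum_eq_zero h0
            subst this
            simp [Tile.size, h0] at h
            subst h
            simp [tilings]
          · obtain ⟨k, hk⟩ := Nat.exists_eq_add_of_lt hpos
            rw [hk] at hl
            have hn : n = k + 2 := by simp [Tile.size] at h; omega
            subst hn
            simp only [tilings, Finset.mem_union, Finset.mem_image]
            exact Or.inl (Or.inl (Or.inl (Or.inl ⟨l, by simpa using hl, rfl⟩)))
      | M1 =>
          rcases Nat.eq_zero_or_pos ((l.map Tile.size).sum) with h0 | hpos
          · have := eq_nil_of_sum_eq_zero h0
            subst this
            simp [Tile.size, h0] at h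
            subst h
            simp [tilings]
          · obtain ⟨k, hk⟩ := Nat.exists_eq_add_of_lt hpos
            rw [hk] at hl
            have hn : n = k + 2 := by simp [Tile.size] at h; omega
            subst hn
            simp only [tilings, Finset.mem_union, Finset.mem_image]
            exact Or.inl (Or.inl (Or.inl (Or.inr ⟨l, by simpa using hl, rfl⟩)))
      | D0 =>
          have hn : n = (l.map Tile.size).sum + 2 := by simp [Tile.size] at h; omega
          subst hn
          simp only [tilings, Finset.mem_union, Finset.mem_image]
          exact Or.inl (Or.inl (Or.inr ⟨l, hl, rfl⟩))
      | D1 =>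
          have hn : n = (l.map Tile.size).sum + 2 := by simp [Tile.size] at h; omega
          subst hn
          simp only [tilings, Finset.mem_union, Finset.mem_image]
          exact Or.inl (Or.inr ⟨l, hl, rfl⟩)
      | D2 =>
          have hn : n = (l.map Tile.size).sum + 2 := by simp [Tile.size] at h; omega
          subst hn
          simp only [tilings, Finset.mem_union, Finset.mem_image]
          exact Or.inr ⟨l, hl, rfl⟩

lemma mem_tilings {T : List Tile} {n : ℕ} : T ∈ tilings n ↔ (T.map Tile.size).sum = n :=
  ⟨sum_of_mem_tilings n T, mem_tilings_of_sum T n⟩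

lemma tilingWt_append {R : Type*} [CommRing R] (a b lam c : ℕ → R) :
    ∀ (l l' : List Tile) (pos : ℕ),
      tilingWt a b lam c pos (l ++ l') =
        tilingWt a b lam c pos l * tilingWt a b lam c (pos + (l.map Tile.size).sum) l'
  | [], l', pos => by simp [tilingWt]
  | t :: ts, l', pos => by
      show tileWt a b lam c pos t * tilingWt a b lam c (pos + t.size) (ts ++ l') = _
      rw [tilingWt_append a b lam c ts l' (pos + t.size)]
      simp only [tilingWt, List.map_cons, List.sum_cons, mul_assoc, add_assoc]

lemma disj_image {s s' : Finset (List Tile)} {t t' : Tile} (h : t ≠ t') :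
    Disjoint (s.image (· ++ [t])) (s'.image (· ++ [t'])) := by
  simp only [Finset.disjoint_left, Finset.mem_image]
  rintro x ⟨l, _, rfl⟩ ⟨l', _, he⟩
  have := congrArg List.getLast? he
  simp only [List.getLast?_concat, Option.some.injEq] at this
  exact h this.symm

lemma sum_image_append {R : Type*} [CommRing R] (a b lam c : ℕ → R) (m : ℕ) (t : Tile) :
    ∑ T ∈ (tilings m).image (· ++ [t]), tilingWt a b lam c 0 T =
      (∑ T ∈ tilings m, tilingWt a b lam c 0 T) * tileWt a b lam c m t := by
  rw [Finset.sum_image (by intro x _ y _ h; simpa using h), Finset.sum_mul]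
  refine Finset.sum_congr rfl fun l hl => ?_
  rw [tilingWt_append]
  simp [tilingWt, sum_of_mem_tilings m l hl]

lemma sum_tilings {R : Type*} [CommRing R] (a b lam c : ℕ → R) :
    ∀ n, ∑ T ∈ tilings n, tilingWt a b lam c 0 T = Ppoly a b lam c n
  | 0 => by simp [tilings, tilingWt, Ppoly]
  | 1 => by
      simp [tilings, tilingWt, tileWt, Ppoly, Tile.size]
      ring
  | n + 2 => by
      have hne : ∀ {t t' : Tile}, t ≠ t' → ∀ (s s' : Finset (List Tile)),
          Disjoint (s.image (· ++ [t])) (s'.image (· ++ [t'])) := fun h _ _ => disj_image h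
      rw [show tilings (n + 2) =
          ((tilings (n + 1)).image (· ++ [Tile.M0])) ∪
            ((tilings (n + 1)).image (· ++ [Tile.M1])) ∪
            ((tilings n).image (· ++ [Tile.D0])) ∪
            ((tilings n).image (· ++ [Tile.D1])) ∪
            ((tilings n).image (· ++ [Tile.D2])) from rfl]
      rw [Finset.sum_union (by
        simp only [Finset.disjoint_union_left]
        exact ⟨⟨⟨hne (by decide) _ _, hne (by decide) _ _⟩, hne (by decide) _ _⟩,
          hne (by decide) _ _⟩)]
      rw [Finset.sum_union (by
        simp only [Finset.disjoint_union_left]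
        exact ⟨⟨hne (by decide) _ _, hne (by decide) _ _⟩, hne (by decide) _ _⟩)]
      rw [Finset.sum_union (by
        simp only [Finset.disjoint_union_left]
        exact ⟨hne (by decide) _ _, hne (by decide) _ _⟩)]
      rw [Finset.sum_union (hne (by decide) _ _)]
      rw [sum_image_append, sum_image_append, sum_image_append, sum_image_append,
        sum_image_append, sum_tilings a b lam c (n + 1), sum_tilings a b lam c n]
      simp only [Ppoly, tileWt]
      ring

/-- For any commutative ring `R` and any sequences in `R`, the set of dotted tilings of
a `1 × n` board is finite and `P_n(x)` equals the sum of their weights. -/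
theorem stmt7 {R : Type*} [CommRing R] (a b lam c : ℕ → R) (n : ℕ) :
    {T : List Tile | (T.map Tile.size).sum = n}.Finite ∧
      Ppoly a b lam c n =
        ∑ᶠ T ∈ {T : List Tile | (T.map Tile.size).sum = n}, tilingWt a b lam c 0 T := by
  have hset : {T : List Tile | (T.map Tile.size).sum = n} = ↑(tilings n) := by
    ext T
    simp [mem_tilings]
  rw [hset]
  refine ⟨(tilings n).finite_toSet, ?_⟩
  rw [finsum_mem_coe_finset, sum_tilings]
end
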